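/- arXiv:2303.01118 — 4 statements merged into one kernel-verified Lean document; each statement's English description precedes it below -/
import Mathlib

section
/- Let g : U → F_2 be a function such that ∑_{u ∈ U} (−1)^{g(u)} = 1, and let f : F_{2^n} → F_2 be the Boolean function defined by f(x) = g(x^{2^m−1}) for x ∈ F_{2^n}^* and f(0) = 0. Then f is a hyper-bent function. -/
open scoped Classical

/-- `(−1)^t` for `t ∈ F₂`, as an integer. -/
def sgn (t : ZMod 2) : ℤ := if t = 0 then 1 else -1

/-- The absolute trace map `Tr₁ⁿ : F_{2ⁿ} → F₂`. -/
noncomputable def tr (K : Type) [Field K] [Fintype K] [Algebra (ZMod 2) K] (x : K) : ZMod 2 :=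
  Algebra.trace (ZMod 2) K x

/-- A Boolean function `f : F_{2^{2m}} → F₂` is hyper-bent if its extended Walsh–Hadamard
transform takes only the values `±2^m`. -/
def IsHyperBent (m : ℕ) (K : Type) [Field K] [Fintype K] [Algebra (ZMod 2) K]
    (f : K → ZMod 2) : Prop :=
  ∀ (lam : K) (i : ℕ), 0 < i → Nat.gcd i (2 ^ (2 * m) - 1) = 1 →
    (∑ x : K, sgn (f x + tr K (lam * x ^ i))) = 2 ^ m ∨
    (∑ x : K, sgn (f x + tr K (lam * x ^ i))) = -(2 ^ m : ℤ)

/-- For `x ≠ 0` in `F_{2^{2m}}`, the element `x^{2^m−1}` lies in the group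
`U = {u : u^{2^m+1} = 1}`. -/
theorem mem_U (m : ℕ) (K : Type) [Field K] [Fintype K]
    (hcard : Fintype.card K = 2 ^ (2 * m)) (x : K) (hx : x ≠ 0) :
    (x ^ (2 ^ m - 1)) ^ (2 ^ m + 1) = 1 := by
  rw [← pow_mul]
  have h1 : (1 : ℕ) ≤ 2 ^ m := Nat.one_le_two_pow
  have h2 : (2 ^ m - 1) * (2 ^ m + 1) = 2 ^ (2 * m) - 1 := by
    have h3 : 2 ^ (2 * m) = 2 ^ m * 2 ^ m := by rw [two_mul, pow_add]
    rw [h3]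
    have h4 : (1:ℕ) ≤ 2 ^ m * 2 ^ m := Nat.one_le_iff_ne_zero.mpr (by positivity)
    zify [h1, h4]
    ring
  rw [h2, ← hcard]
  exact FiniteField.pow_card_sub_one_eq_one x hx

/-! ### Auxiliary lemmas -/

lemma sgn_add (a b : ZMod 2) : sgn (a + b) = sgn a * sgn b := by revert a b; decide

lemma sgn_cases (a : ZMod 2) : sgn a = 1 ∨ sgn a = -1 := by revert a; decide

lemma sgn_one_add (a : ZMod 2) : sgn (a + 1) = - sgn a := by revert a; decide

lemma zmod2_ne_zero (a : ZMod 2) (h : a ≠ 0) : a = 1 := by revert a; decide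

lemma eq_one_of_pow_coprime' {K : Type} [Monoid K] {x : K} {d e : ℕ}
    (h : Nat.Coprime d e) (hd : x ^ d = 1) (he : x ^ e = 1) : x = 1 := by
  have h3 : orderOf x ∣ 1 := h ▸ Nat.dvd_gcd (orderOf_dvd_of_pow_eq_one hd)
    (orderOf_dvd_of_pow_eq_one he)
  exact orderOf_eq_one_iff.mp (Nat.dvd_one.mp h3)

lemma ne_zero_of_pow_eq_one {K : Type} [Field K] {x : K} {d : ℕ} (hd : 0 < d)
    (h : x ^ d = 1) : x ≠ 0 := by
  intro h0
  rw [h0, zero_pow hd.ne'] at h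
  exact zero_ne_one h

lemma eq_of_pow_coprime {K : Type} [Field K] {x y : K} {d e : ℕ} (hd : 0 < d)
    (h : Nat.Coprime d e) (hxd : x ^ d = 1) (hyd : y ^ d = 1) (hxy : x ^ e = y ^ e) : x = y := by
  have hy0 : y ≠ 0 := ne_zero_of_pow_eq_one hd hyd
  have h1 : (x * y⁻¹) ^ d = 1 := by
    rw [mul_pow, inv_pow, hxd, hyd, inv_one, mul_one]
  have h2 : (x * y⁻¹) ^ e = 1 := by
    rw [mul_pow, inv_pow, hxy, mul_inv_cancel₀ (pow_ne_zero _ hy0)]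
  have := eq_one_of_pow_coprime' h h1 h2
  field_simp at this
  exact this

lemma pow_bij {K : Type} [Field K] [Fintype K] {d e : ℕ} (hd : 0 < d) (h : Nat.Coprime d e) :
    Function.Bijective (fun x : {x : K // x ^ d = 1} =>
      (⟨x.1 ^ e, by rw [← pow_mul, mul_comm, pow_mul, x.2, one_pow]⟩ : {x : K // x ^ d = 1})) := by
  refine Finite.injective_iff_bijective.mp ?_
  rintro ⟨x, hx⟩ ⟨y, hy⟩ hxy
  simp only [Subtype.mk.injEq] at hxy ⊢
  exact eq_of_pow_coprime hd h hx hy hxy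

lemma coprime_qsucc_qpred {q : ℕ} (h2 : 2 ∣ q) (hq : 2 ≤ q) : Nat.Coprime (q + 1) (q - 1) := by
  have h : Nat.gcd (q + 1) (q - 1) ∣ 2 := by
    have := Nat.dvd_sub (Nat.gcd_dvd_left (q+1) (q-1)) (Nat.gcd_dvd_right (q+1) (q-1))
    simpa [show q + 1 - (q - 1) = 2 by omega] using this
  have hodd : ¬ (2 ∣ q + 1) := by omega
  rcases (Nat.dvd_prime Nat.prime_two).mp h with h1 | h1
  · exact h1
  · exact absurd (h1 ▸ Nat.gcd_dvd_left (q+1) (q-1)) hodd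

lemma card_pow_eq_one_of_dvd (K : Type) [Field K] [Fintype K] {n : ℕ} (hn : 0 < n)
    (hd : n ∣ Fintype.card K - 1) : Fintype.card {x : K // x ^ n = 1} = n := by
  obtain ⟨g, hg⟩ := IsCyclic.exists_generator (α := Kˣ)
  have hog : orderOf g = Fintype.card K - 1 := by
    rw [orderOf_eq_card_of_forall_mem_zpowers hg, Nat.card_eq_fintype_card, Fintype.card_units]
  have hN : 0 < Fintype.card K - 1 := by have := Fintype.one_lt_card (α := K); omega
  have horder : orderOf ((g ^ ((Fintype.card K - 1) / n) : Kˣ) : K) = n := by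
    rw [orderOf_units, orderOf_pow, hog, Nat.gcd_eq_right (Nat.div_dvd_of_dvd hd),
      Nat.div_div_self hd (by omega)]
  have hprim : IsPrimitiveRoot ((g ^ ((Fintype.card K - 1) / n) : Kˣ) : K) n := by
    have := IsPrimitiveRoot.orderOf ((g ^ ((Fintype.card K - 1) / n) : Kˣ) : K)
    rwa [horder] at this
  have hset : (Finset.univ.filter fun x : K => x ^ n = 1) = Polynomial.nthRootsFinset n (1 : K) := by
    ext x; simp [Polynomial.mem_nthRootsFinset hn]
  rw [Fintype.card_subtype, hset, hprim.card_nthRootsFinset]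

/-- decomposition of the sum over nonzero elements of `K` along `U × F_q^*`. -/
lemma sum_decomp (K : Type) [Field K] [Fintype K] {q : ℕ} (hq : 2 ≤ q) (h2 : 2 ∣ q)
    (hcard : Fintype.card K = q ^ 2) (h : K → ℤ) :
    ∑ x ∈ Finset.univ.erase (0 : K), h x
      = ∑ u : {u : K // u ^ (q + 1) = 1}, ∑ y : {y : K // y ^ (q - 1) = 1}, h (u.1 * y.1) := by
  obtain ⟨k, hk⟩ := h2
  have hk1 : 1 ≤ k := by omega
  have hNcard : Fintype.card K - 1 = q ^ 2 - 1 := by rw [hcard]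
  have hq2 : q ^ 2 - 1 = (q - 1) * (q + 1) := by
    zify [show 1 ≤ q by omega, Nat.one_le_pow 2 q (by omega)]
    ring
  have key : ∑ x ∈ Finset.univ.erase (0 : K), h x
      = ∑ p : {u : K // u ^ (q + 1) = 1} × {y : K // y ^ (q - 1) = 1}, h (p.1.1 * p.2.1) := by
    symm
    apply Finset.sum_bij (fun (p : {u : K // u ^ (q + 1) = 1} × {y : K // y ^ (q - 1) = 1}) _ =>
      p.1.1 * p.2.1)
    · -- maps into erase 0
      intro p _
      have h1 : p.1.1 ≠ 0 := ne_zero_of_pow_eq_one (by omega) p.1.2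
      have h2' : p.2.1 ≠ 0 := ne_zero_of_pow_eq_one (by omega) p.2.2
      exact Finset.mem_erase.mpr ⟨mul_ne_zero h1 h2', Finset.mem_univ _⟩
    · -- injective
      rintro ⟨⟨u1, hu1⟩, ⟨y1, hy1⟩⟩ _ ⟨⟨u2, hu2⟩, ⟨y2, hy2⟩⟩ _ heq
      simp only at heq
      have hu20 : u2 ≠ 0 := ne_zero_of_pow_eq_one (by omega) hu2
      have hy10 : y1 ≠ 0 := ne_zero_of_pow_eq_one (by omega) hy1
      have hz1 : (u1 * u2⁻¹) ^ (q + 1) = 1 := by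
        rw [mul_pow, inv_pow, hu1, hu2, inv_one, mul_one]
      have hzeq : u1 * u2⁻¹ = y2 * y1⁻¹ := by field_simp; linear_combination heq
      have hz2 : (u1 * u2⁻¹) ^ (q - 1) = 1 := by
        rw [hzeq, mul_pow, inv_pow, hy1, hy2, inv_one, mul_one]
      have hz : u1 * u2⁻¹ = 1 := eq_one_of_pow_coprime' (coprime_qsucc_qpred ⟨k, hk⟩ hq) hz1 hz2
      have hu : u1 = u2 := by field_simp at hz; exact hz
      have hy : y1 = y2 := by
        subst hu
        exact mul_left_cancel₀ hu20 heq
      simp [Prod.ext_iff, hu, hy]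
    · -- surjective
      intro x hx
      have hx0 : x ≠ 0 := (Finset.mem_erase.mp hx).1
      have hxN : x ^ (q ^ 2 - 1) = 1 := by
        rw [← hNcard]; exact FiniteField.pow_card_sub_one_eq_one x hx0
      set d := q - 1 with hd
      have hdq : q = d + 1 := by omega
      have h2k : d + 1 = 2 * k := by omega
      set s := k * (d + 2) with hs
      have e1 : s * d = (d * (d + 2)) * k := by ring
      have e2 : s * (d + 2) = (d * (d + 2)) * (k + 1) + (d + 2) := by
        zify
        nlinarith [h2k]
      have hq2' : q ^ 2 - 1 = d * (d + 2) := by rw [hq2, show q + 1 = d + 2 by omega]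
      have hy : (x ^ s) ^ (q - 1) = 1 := by
        rw [← hd, ← pow_mul, e1, ← hq2', pow_mul, hxN, one_pow]
      have hxq1 : x ^ (q + 1) ≠ 0 := pow_ne_zero _ hx0
      have hu : (x * (x ^ s)⁻¹) ^ (q + 1) = 1 := by
        have hxs : (x ^ s) ^ (q + 1) = x ^ (q + 1) := by
          rw [← pow_mul, show q + 1 = d + 2 by omega, e2, ← hq2', pow_add, pow_mul, hxN, one_pow,
            one_mul]
        rw [mul_pow, inv_pow, hxs, mul_inv_cancel₀ hxq1]
      refine ⟨⟨⟨x * (x ^ s)⁻¹, hu⟩, ⟨x ^ s, hy⟩⟩, Finset.mem_univ _, ?_⟩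
      have hxs0 : (x ^ s : K) ≠ 0 := pow_ne_zero _ hx0
      field_simp
    · intro p _
      rfl
  rw [key, Fintype.sum_prod_type]

/-- The subfield of `q`-th powers fixed points. -/
def Fsub (K : Type) [Field K] (q : ℕ) (hq0 : q ≠ 0)
    (hq : ∀ a b : K, (a + b) ^ q = a ^ q + b ^ q) (hneg : ∀ a : K, -a = a) : Subfield K where
  carrier := {x | x ^ q = x}
  mul_mem' := by
    intro a b ha hb
    simp only [Set.mem_setOf_eq] at *
    rw [mul_pow, ha, hb]
  one_mem' := one_pow q
  add_mem' := by
    intro a b ha hb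
    simp only [Set.mem_setOf_eq] at *
    rw [hq, ha, hb]
  zero_mem' := by simp [zero_pow hq0]
  neg_mem' := by
    intro a ha
    simp only [Set.mem_setOf_eq] at *
    rw [hneg, ha]
  inv_mem' := by
    intro a ha
    simp only [Set.mem_setOf_eq] at *
    rw [inv_pow, ha]

lemma trace_dichotomy (m : ℕ) (hm : 0 < m) (K : Type) [Field K] [Fintype K]
    [Algebra (ZMod 2) K] (hcard : Fintype.card K = 2 ^ (2 * m))
    (hFcard : Fintype.card {x : K // x ^ (2 ^ m) = x} = 2 ^ m) :
    (∀ c y : K, c ^ (2 ^ m) = c → y ^ (2 ^ m) = y → tr K (c * y) = 0) ∧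
    (∀ c : K, c ^ (2 ^ m) ≠ c → ∃ a : K, a ^ (2 ^ m) = a ∧ tr K (c * a) ≠ 0) := by
  haveI : Fact (Nat.Prime 2) := ⟨Nat.prime_two⟩
  haveI hchar : CharP K 2 := charP_of_injective_ringHom (algebraMap (ZMod 2) K).injective 2
  set q := 2 ^ m with hqdef
  have hq2 : 2 ≤ q := by
    calc 2 = 2 ^ 1 := rfl
    _ ≤ 2 ^ m := Nat.pow_le_pow_right (by norm_num) hm
  have hcardq : Fintype.card K = q ^ 2 := by rw [hcard, ← pow_mul, mul_comm]
  set F : Subfield K := Fsub K q (by omega) (fun a b => add_pow_char_pow a b 2 m)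
    (fun a => CharTwo.neg_eq a) with hFdef
  haveI : CharP F 2 := F.subtype.charP Subtype.coe_injective 2
  letI : Algebra (ZMod 2) F := ZMod.algebra F 2
  haveI : @IsScalarTower (ZMod 2) F K Algebra.toSMul Algebra.toSMul Algebra.toSMul :=
    IsScalarTower.of_algebraMap_eq' (RingHom.ext_zmod _ _)
  have hFcard' : Fintype.card F = q := hFcard
  have hrank : Module.finrank F K = 2 := by
    have h := Module.card_eq_pow_finrank (K := F) (V := K)
    rw [hcardq, hFcard'] at h
    exact (Nat.pow_right_injective hq2 h.symm)
  have halg : ∀ z : F, algebraMap F K z = z.1 := fun z => rfl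
  -- part (a)
  have parta : ∀ c y : K, c ^ q = c → y ^ q = y → tr K (c * y) = 0 := by
    intro c y hc hy
    have hmem : c * y = algebraMap F K (⟨c, hc⟩ * ⟨y, hy⟩) := rfl
    rw [tr, hmem, ← Algebra.trace_trace (S := F), Algebra.trace_algebraMap, hrank,
      CharTwo.two_nsmul, map_zero]
  refine ⟨parta, ?_⟩
  intro c hc
  by_contra hcon
  push_neg at hcon
  -- hcon : ∀ a, a ^ q = a → tr K (c * a) = 0
  -- the annihilator submodule
  set W : Submodule F K :=
    { carrier := {z : K | ∀ a : K, a ^ q = a → tr K (z * a) = 0}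
      add_mem' := by
        intro z1 z2 h1 h2 a ha
        have : (z1 + z2) * a = z1 * a + z2 * a := by ring
        rw [this]
        show Algebra.trace (ZMod 2) K _ = 0
        rw [map_add]
        have e1 := h1 a ha
        have e2 := h2 a ha
        rw [tr] at e1 e2
        rw [e1, e2, add_zero]
      zero_mem' := by
        intro a ha
        rw [zero_mul]
        show Algebra.trace (ZMod 2) K 0 = 0
        rw [map_zero]
      smul_mem' := by
        intro z w hw a ha
        have hz : (z : K) ^ q = (z : K) := z.2
        have hsmul : (z • w) * a = w * ((z : K) * a) := by
          rw [Algebra.smul_def, halg]; ring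
        rw [hsmul]
        exact hw _ (by rw [mul_pow, hz, ha]) } with hWdef
  have hcW : c ∈ W := hcon
  have h1W : (1 : K) ∈ W := by
    intro a ha
    exact parta 1 a (one_pow q) ha
  have hWne : W ≠ ⊤ := by
    intro hW
    have hall : ∀ b : K, Algebra.trace (ZMod 2) K ((1 : K) * b) = 0 := by
      intro b
      have hbW : b ∈ W := hW ▸ Submodule.mem_top
      have := hbW 1 (one_pow q)
      rw [tr, mul_one] at this
      rw [one_mul]
      exact this
    have hnd := traceForm_nondegenerate (ZMod 2) K
    have h10 : (1 : K) = 0 := hnd.1 1 (by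
      intro n
      rw [Algebra.traceForm_apply]
      exact hall n)
    exact one_ne_zero h10
  have hle : Submodule.span F {(1 : K)} ≤ W := by
    rw [Submodule.span_le]
    intro z hz
    rw [Set.mem_singleton_iff.mp hz]
    exact h1W
  have hWrank : Module.finrank F W ≤ 1 := by
    have hlt : Module.finrank F W < Module.finrank F K :=
      Submodule.finrank_lt hWne
    omega
  have hspanrank : Module.finrank F (Submodule.span F {(1 : K)}) = 1 :=
    finrank_span_singleton one_ne_zero
  have hWeq : Submodule.span F {(1 : K)} = W :=
    Submodule.eq_of_le_of_finrank_le hle (by omega)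
  have hcmem : c ∈ Submodule.span F {(1 : K)} := hWeq ▸ hcW
  obtain ⟨z, hz⟩ := Submodule.mem_span_singleton.mp hcmem
  have hcF : c ^ q = c := by
    have : c = (z : K) := by rw [← hz, Algebra.smul_def, halg, mul_one]
    rw [this]
    exact z.2
  exact hc hcF

lemma filter_fixed_insert (K : Type) [Field K] [Fintype K] {q : ℕ} (hq : 2 ≤ q) :
    (Finset.univ.filter fun x : K => x ^ q = x)
      = insert (0 : K) (Finset.univ.filter fun x : K => x ^ (q - 1) = 1) := by
  ext x
  simp only [Finset.mem_insert, Finset.mem_filter, Finset.mem_univ, true_and]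
  constructor
  · intro hx
    rcases eq_or_ne x 0 with h | h
    · exact Or.inl h
    · right
      have hx' : x ^ (q - 1) * x = 1 * x := by
        rw [← pow_succ, show q - 1 + 1 = q by omega, hx, one_mul]
      exact mul_right_cancel₀ h hx'
  · rintro (rfl | hx)
    · exact zero_pow (by omega)
    · calc x ^ q = x ^ (q - 1) * x := by rw [← pow_succ, show q - 1 + 1 = q by omega]
        _ = x := by rw [hx, one_mul]

lemma zero_not_mem_filter_root (K : Type) [Field K] [Fintype K] {q : ℕ} (hq : 2 ≤ q) :
    (0 : K) ∉ (Finset.univ.filter fun x : K => x ^ (q - 1) = 1) := by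
  simp [zero_pow (show q - 1 ≠ 0 by omega)]

lemma card_fixed (K : Type) [Field K] [Fintype K] {q : ℕ} (hq : 2 ≤ q)
    (h1 : Fintype.card {x : K // x ^ (q - 1) = 1} = q - 1) :
    Fintype.card {x : K // x ^ q = x} = q := by
  rw [Fintype.card_subtype] at h1 ⊢
  rw [filter_fixed_insert K hq, Finset.card_insert_of_notMem (zero_not_mem_filter_root K hq), h1]
  omega

lemma char_sum_zero (K : Type) [Field K] [Fintype K] [Algebra (ZMod 2) K] {q : ℕ}
    (c a₀ : K) (ha₀ : a₀ ^ q = a₀) (htr : tr K (c * a₀) = 1)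
    (hadd : ∀ a b : K, (a + b) ^ q = a ^ q + b ^ q) (hcan : ∀ a : K, a + a₀ + a₀ = a) :
    ∑ x ∈ Finset.univ.filter (fun x : K => x ^ q = x), sgn (tr K (c * x)) = 0 := by
  set B := Finset.univ.filter (fun x : K => x ^ q = x) with hB
  have hmem : ∀ x ∈ B, x + a₀ ∈ B := by
    intro x hx
    rw [hB, Finset.mem_filter] at hx ⊢
    exact ⟨Finset.mem_univ _, by rw [hadd, hx.2, ha₀]⟩
  have key : ∑ x ∈ B, sgn (tr K (c * x)) = ∑ x ∈ B, sgn (tr K (c * (x + a₀))) := by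
    apply Finset.sum_nbij' (fun x => x + a₀) (fun x => x + a₀)
    · exact hmem
    · exact hmem
    · intro x _; exact hcan x
    · intro x _; exact hcan x
    · intro x _
      rw [hcan x]
  have hpt : ∀ x : K, sgn (tr K (c * (x + a₀))) = - sgn (tr K (c * x)) := by
    intro x
    have hd : c * (x + a₀) = c * x + c * a₀ := by ring
    rw [hd]
    show sgn (Algebra.trace (ZMod 2) K _) = _
    rw [map_add]
    have h1 : Algebra.trace (ZMod 2) K (c * a₀) = 1 := htr
    rw [h1]
    exact sgn_one_add _
  rw [Finset.sum_congr rfl (fun x _ => hpt x)] at key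
  rw [Finset.sum_neg_distrib] at key
  omega

lemma fixed_iff_root {K : Type} [Field K] {q : ℕ} (hq : 2 ≤ q) {x : K} (hx : x ≠ 0) :
    x ^ q = x ↔ x ^ (q - 1) = 1 := by
  constructor
  · intro h
    have hx' : x ^ (q - 1) * x = 1 * x := by
      rw [← pow_succ, show q - 1 + 1 = q by omega, h, one_mul]
    exact mul_right_cancel₀ hx hx'
  · intro h
    calc x ^ q = x ^ (q - 1) * x := by rw [← pow_succ, show q - 1 + 1 = q by omega]
      _ = x := by rw [h, one_mul]

/-- If `g : U → F₂` satisfies `∑_{u ∈ U} (−1)^{g(u)} = 1` and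
`f : F_{2^{2m}} → F₂` is defined by `f(x) = g(x^{2^m−1})` for `x ≠ 0` and `f(0) = 0`,
then `f` is hyper-bent. -/
theorem psap_construction (m : ℕ) (hm : 0 < m)
    (K : Type) [Field K] [Fintype K] [Algebra (ZMod 2) K]
    (hcard : Fintype.card K = 2 ^ (2 * m))
    (g : {u : K // u ^ (2 ^ m + 1) = 1} → ZMod 2)
    (hg : (∑ u : {u : K // u ^ (2 ^ m + 1) = 1}, sgn (g u)) = 1)
    (f : K → ZMod 2)
    (hfdef : ∀ (x : K) (hx : x ≠ 0), f x = g ⟨x ^ (2 ^ m - 1), mem_U m K hcard x hx⟩)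
    (hf0 : f 0 = 0) :
    IsHyperBent m K f := by
  intro lam i hi hgcd
  haveI : Fact (Nat.Prime 2) := ⟨Nat.prime_two⟩
  haveI hchar : CharP K 2 := charP_of_injective_ringHom (algebraMap (ZMod 2) K).injective 2
  obtain ⟨parta, partb⟩ := trace_dichotomy m hm K hcard
    (card_fixed K (by
      calc 2 = 2 ^ 1 := rfl
      _ ≤ 2 ^ m := Nat.pow_le_pow_right (by norm_num) hm)
      (card_pow_eq_one_of_dvd K
        (by have : 2 ≤ 2 ^ m := by calc 2 = 2 ^ 1 := rfl
                                      _ ≤ 2 ^ m := Nat.pow_le_pow_right (by norm_num) hm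
            omega)
        (by
          rw [hcard]
          refine ⟨2 ^ m + 1, ?_⟩
          have h1 : (1:ℕ) ≤ 2 ^ m := Nat.one_le_two_pow
          have h3 : 2 ^ (2 * m) = 2 ^ m * 2 ^ m := by rw [two_mul, pow_add]
          rw [h3]
          have h4 : (1:ℕ) ≤ 2 ^ m * 2 ^ m := Nat.one_le_iff_ne_zero.mpr (by positivity)
          zify [h1, h4]
          ring)))
  have hq2 : 2 ≤ (2 ^ m) := by
    calc 2 = 2 ^ 1 := rfl
    _ ≤ 2 ^ m := Nat.pow_le_pow_right (by norm_num) hm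
  have h2q : 2 ∣ (2 ^ m) := dvd_pow_self 2 hm.ne'
  have hcardq : Fintype.card K = (2 ^ m) ^ 2 := by rw [hcard, ← pow_mul, mul_comm]
  have hq21 : (2 ^ m) ^ 2 - 1 = ((2 ^ m) - 1) * ((2 ^ m) + 1) := by
    zify [show 1 ≤ (2 ^ m) by omega, Nat.one_le_pow 2 (2 ^ m) (by omega)]
    ring
  have hcardsub : Fintype.card K - 1 = (2 ^ m) ^ 2 - 1 := by rw [hcardq]
  have hdvd1 : (2 ^ m) - 1 ∣ Fintype.card K - 1 := by
    rw [hcardsub, hq21]; exact Dvd.intro _ rfl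
  have hdvdu : (2 ^ m) + 1 ∣ Fintype.card K - 1 := by
    rw [hcardsub, hq21]; exact Dvd.intro_left _ rfl
  have hcop : Nat.Coprime ((2 ^ m) + 1) ((2 ^ m) - 1) := coprime_qsucc_qpred h2q hq2
  have hcardFs : Fintype.card {x : K // x ^ ((2 ^ m) - 1) = 1} = (2 ^ m) - 1 :=
    card_pow_eq_one_of_dvd K (by omega) hdvd1
  have hcopi : Nat.Coprime i ((2 ^ m) ^ 2 - 1) := by
    have : (2:ℕ) ^ (2 * m) = (2 ^ m) ^ 2 := by rw [← pow_mul, mul_comm]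
    rwa [this] at hgcd
  have hcopiu : Nat.Coprime i ((2 ^ m) + 1) :=
    Nat.Coprime.coprime_dvd_right (by rw [hq21]; exact Dvd.intro_left _ rfl) hcopi
  have hcopid : Nat.Coprime i ((2 ^ m) - 1) :=
    Nat.Coprime.coprime_dvd_right (by rw [hq21]; exact Dvd.intro _ rfl) hcopi
  -- memberships
  have hUne : ∀ u : {u : K // u ^ ((2 ^ m) + 1) = 1}, u.1 ≠ 0 :=
    fun u => ne_zero_of_pow_eq_one (by omega) u.2
  have hUmem : ∀ u : {u : K // u ^ ((2 ^ m) + 1) = 1}, (u.1 ^ ((2 ^ m) - 1)) ^ ((2 ^ m) + 1) = 1 := by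
    intro u
    rw [← pow_mul, mul_comm, pow_mul, u.2, one_pow]
  -- split off zero
  have hzero : sgn (f 0 + tr K (lam * 0 ^ i)) = 1 := by
    rw [zero_pow hi.ne', mul_zero, hf0]
    show sgn (0 + Algebra.trace (ZMod 2) K 0) = 1
    rw [map_zero, add_zero]
    rfl
  have hsplit : (∑ x : K, sgn (f x + tr K (lam * x ^ i)))
      = (∑ x ∈ Finset.univ.erase 0, sgn (f x + tr K (lam * x ^ i))) + 1 := by
    have h := Finset.sum_erase_add Finset.univ
      (fun x => sgn (f x + tr K (lam * x ^ i))) (Finset.mem_univ 0)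
    rw [hzero] at h
    exact h.symm
  -- pointwise rewriting
  have hpoint : ∀ (u : {u : K // u ^ ((2 ^ m) + 1) = 1}) (y : {y : K // y ^ ((2 ^ m) - 1) = 1}),
      sgn (f (u.1 * y.1) + tr K (lam * (u.1 * y.1) ^ i))
        = sgn (g ⟨u.1 ^ ((2 ^ m) - 1), hUmem u⟩) * sgn (tr K ((lam * u.1 ^ i) * y.1 ^ i)) := by
    intro u y
    have hy0 : y.1 ≠ 0 := ne_zero_of_pow_eq_one (by omega) y.2
    have hne : u.1 * y.1 ≠ 0 := mul_ne_zero (hUne u) hy0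
    have hfv : f (u.1 * y.1) = g ⟨u.1 ^ ((2 ^ m) - 1), hUmem u⟩ := by
      rw [hfdef _ hne]
      congr 1
      apply Subtype.ext
      show (u.1 * y.1) ^ ((2 ^ m) - 1) = u.1 ^ ((2 ^ m) - 1)
      rw [mul_pow, y.2, mul_one]
    rw [hfv, sgn_add]
    congr 2
    rw [mul_pow]
    ring
  -- inner substitution y ↦ y^i
  have hre : ∀ c : K, (∑ y : {y : K // y ^ ((2 ^ m) - 1) = 1}, sgn (tr K (c * y.1 ^ i)))
      = ∑ y : {y : K // y ^ ((2 ^ m) - 1) = 1}, sgn (tr K (c * y.1)) := by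
    intro c
    exact Fintype.sum_bijective _ (pow_bij (by omega) hcopid.symm) _ _ (fun y => rfl)
  -- the inner character sum
  have hT : ∀ c : K, (∑ y : {y : K // y ^ ((2 ^ m) - 1) = 1}, sgn (tr K (c * y.1)))
      = if c ^ (2 ^ m) = c then (((2 ^ m) : ℤ) - 1) else -1 := by
    intro c
    have hsub : (∑ y : {y : K // y ^ ((2 ^ m) - 1) = 1}, sgn (tr K (c * y.1)))
        = ∑ x ∈ Finset.univ.filter (fun x : K => x ^ ((2 ^ m) - 1) = 1), sgn (tr K (c * x)) := by
      symm
      apply Finset.sum_subtype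
      intro x
      simp
    split_ifs with hcF
    · rw [hsub]
      have hall : ∀ x ∈ Finset.univ.filter (fun x : K => x ^ ((2 ^ m) - 1) = 1),
          sgn (tr K (c * x)) = 1 := by
        intro x hx
        have hx1 : x ^ ((2 ^ m) - 1) = 1 := (Finset.mem_filter.mp hx).2
        have hx0 : x ≠ 0 := ne_zero_of_pow_eq_one (by omega) hx1
        rw [parta c x hcF ((fixed_iff_root hq2 hx0).mpr hx1)]
        rfl
      rw [Finset.sum_congr rfl hall, Finset.sum_const, ← Fintype.card_subtype, hcardFs]
      simp only [nsmul_eq_mul, mul_one]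
      rw [Nat.cast_sub Nat.one_le_two_pow]
      push_cast
      ring
    · obtain ⟨a₀, ha₀, htr0⟩ := partb c hcF
      have htr1 : tr K (c * a₀) = 1 := zmod2_ne_zero _ htr0
      have hz := char_sum_zero K c a₀ ha₀ htr1 (fun a b => add_pow_char_pow a b 2 m)
        (fun a => by rw [add_assoc, CharTwo.add_self_eq_zero, add_zero])
      rw [filter_fixed_insert K hq2,
        Finset.sum_insert (zero_not_mem_filter_root K hq2)] at hz
      have h00 : sgn (tr K (c * 0)) = 1 := by
        rw [mul_zero]
        show sgn (Algebra.trace (ZMod 2) K 0) = 1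
        rw [map_zero]
        rfl
      rw [h00] at hz
      rw [hsub]
      omega
  -- the sum over U of the g-signs
  have hsU : (∑ u : {u : K // u ^ ((2 ^ m) + 1) = 1}, sgn (g ⟨u.1 ^ ((2 ^ m) - 1), hUmem u⟩)) = 1 := by
    rw [← hg]
    exact Fintype.sum_bijective _ (pow_bij (by omega) hcop) _ _ (fun u => rfl)
  -- main decomposition
  rw [hsplit, sum_decomp K hq2 h2q hcardq]
  have hmain : (∑ u : {u : K // u ^ ((2 ^ m) + 1) = 1}, ∑ y : {y : K // y ^ ((2 ^ m) - 1) = 1},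
      sgn (f (u.1 * y.1) + tr K (lam * (u.1 * y.1) ^ i)))
      = ∑ u : {u : K // u ^ ((2 ^ m) + 1) = 1}, sgn (g ⟨u.1 ^ ((2 ^ m) - 1), hUmem u⟩) *
          (if (lam * u.1 ^ i) ^ (2 ^ m) = lam * u.1 ^ i then (((2 ^ m) : ℤ) - 1) else -1) := by
    apply Finset.sum_congr rfl
    intro u _
    rw [Finset.sum_congr rfl (fun y _ => hpoint u y), ← Finset.mul_sum, hre, hT]
  rw [hmain]
  rcases eq_or_ne lam 0 with rfl | hlam
  · -- lam = 0
    left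
    have hcond0 : ∀ u : {u : K // u ^ ((2 ^ m) + 1) = 1},
        ((0 : K) * u.1 ^ i) ^ (2 ^ m) = (0 : K) * u.1 ^ i := by
      intro u
      rw [zero_mul, zero_pow (by omega)]
    have : (∑ u : {u : K // u ^ ((2 ^ m) + 1) = 1}, sgn (g ⟨u.1 ^ ((2 ^ m) - 1), hUmem u⟩) *
        (if ((0:K) * u.1 ^ i) ^ (2 ^ m) = (0:K) * u.1 ^ i then (((2 ^ m) : ℤ) - 1) else -1))
        = ∑ u : {u : K // u ^ ((2 ^ m) + 1) = 1}, sgn (g ⟨u.1 ^ ((2 ^ m) - 1), hUmem u⟩) * (((2 ^ m) : ℤ) - 1) := by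
      apply Finset.sum_congr rfl
      intro u _
      rw [if_pos (hcond0 u)]
    rw [this, ← Finset.sum_mul, hsU, one_mul]
    push_cast
    ring
  · -- lam ≠ 0
    have hlamN : lam ^ ((2 ^ m) ^ 2 - 1) = 1 := by
      rw [← hcardsub]
      exact FiniteField.pow_card_sub_one_eq_one lam hlam
    have hcopbig : Nat.Coprime ((2 ^ m) + 1) (i * ((2 ^ m) - 1)) := Nat.Coprime.mul_right hcopiu.symm hcop
    have hbij := pow_bij (K := K) (d := (2 ^ m) + 1) (e := i * ((2 ^ m) - 1)) (by omega) hcopbig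
    have hmu : ((lam ^ ((2 ^ m) - 1))⁻¹) ^ ((2 ^ m) + 1) = 1 := by
      rw [inv_pow, ← pow_mul, ← hq21, hlamN, inv_one]
    obtain ⟨u₀, hu₀⟩ := hbij.2 ⟨(lam ^ ((2 ^ m) - 1))⁻¹, hmu⟩
    have hcond : ∀ u : {u : K // u ^ ((2 ^ m) + 1) = 1},
        ((lam * u.1 ^ i) ^ (2 ^ m) = lam * u.1 ^ i) ↔ u = u₀ := by
      intro u
      have hcu0 : lam * u.1 ^ i ≠ 0 := mul_ne_zero hlam (pow_ne_zero _ (hUne u))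
      rw [fixed_iff_root hq2 hcu0]
      have hexp : (lam * u.1 ^ i) ^ ((2 ^ m) - 1) = lam ^ ((2 ^ m) - 1) * u.1 ^ (i * ((2 ^ m) - 1)) := by
        rw [mul_pow, ← pow_mul]
      rw [hexp]
      constructor
      · intro h
        apply hbij.1
        rw [hu₀]
        apply Subtype.ext
        exact eq_inv_of_mul_eq_one_right h
      · intro h
        have hval : u₀.1 ^ (i * ((2 ^ m) - 1)) = (lam ^ ((2 ^ m) - 1))⁻¹ :=
          congrArg Subtype.val hu₀
        rw [h, hval, mul_inv_cancel₀ (pow_ne_zero _ hlam)]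
    have hsplit2 : ∀ u : {u : K // u ^ ((2 ^ m) + 1) = 1},
        sgn (g ⟨u.1 ^ ((2 ^ m) - 1), hUmem u⟩) *
          (if (lam * u.1 ^ i) ^ (2 ^ m) = lam * u.1 ^ i then (((2 ^ m) : ℤ) - 1) else -1)
        = sgn (g ⟨u.1 ^ ((2 ^ m) - 1), hUmem u⟩) * (-1)
          + (if u = u₀ then sgn (g ⟨u.1 ^ ((2 ^ m) - 1), hUmem u⟩) * ((2 ^ m) : ℤ) else 0) := by
      intro u
      rw [if_congr (hcond u) rfl rfl]
      by_cases h : u = u₀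
      · rw [if_pos h, if_pos h]; ring
      · rw [if_neg h, if_neg h]; ring
    rw [Finset.sum_congr rfl (fun u _ => hsplit2 u), Finset.sum_add_distrib, ← Finset.sum_mul,
      hsU, Finset.sum_ite_eq' Finset.univ u₀ (fun u => sgn (g ⟨u.1 ^ ((2 ^ m) - 1), hUmem u⟩) * ((2 ^ m) : ℤ))]
    rw [if_pos (Finset.mem_univ u₀)]
    rcases sgn_cases (g ⟨u₀.1 ^ ((2 ^ m) - 1), hUmem u₀⟩) with h | h
    · left
      rw [h]
      push_cast
      ring
    · right
      rw [h]
      push_cast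
      ring
end

section
/- Let u_0 ∈ U and let u ∈ U with u ≠ 1. Then (Tr_m^n(u_0 ∑_{i=1}^{2^{m−1}} u^i))^2 = u_0^2/(1 + u^{−1}) + u_0^{−2}/(1 + u), where both sides are computed in F_{2^n}. -/
open scoped Classical

/-- The relative trace `Tr_m^n : F_{2^{2m}} → F_{2^m}`, `z ↦ z + z^{2^m}` (valued in `K`;
its image lies in the subfield `F_{2^m} = {z : z^{2^m} = z}`). -/
def trmn (m : ℕ) {K : Type} [Field K] (z : K) : K := z + z ^ 2 ^ m

/-- Let `u₀ ∈ U` and `u ∈ U` with `u ≠ 1`.  Then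
`(Tr_m^n(u₀ ∑_{i=1}^{2^{m−1}} uⁱ))² = u₀²/(1 + u⁻¹) + u₀⁻²/(1 + u)` in `F_{2^{2m}}`. -/
theorem trace_square_identity (m : ℕ) (hm : 0 < m)
    (K : Type) [Field K] [Fintype K]
    (hcard : Fintype.card K = 2 ^ (2 * m))
    (u0 : K) (hu0U : u0 ^ (2 ^ m + 1) = 1)
    (u : K) (hu : u ^ (2 ^ m + 1) = 1) (hu1 : u ≠ 1) :
    (trmn m (u0 * ∑ i ∈ Finset.Icc 1 (2 ^ (m - 1)), u ^ i)) ^ 2 =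
      u0 ^ 2 / (1 + u⁻¹) + (u0 ^ 2)⁻¹ / (1 + u) := by
  -- characteristic 2
  have h2m0 : 2 * m ≠ 0 := by omega
  have hchar : ringChar K = 2 := by
    rw [FiniteField.even_card_iff_char_two, hcard, Nat.pow_mod]
    simp [h2m0]
  haveI : CharP K 2 := hchar ▸ ringChar.charP K
  haveI : Fact (Nat.Prime 2) := ⟨Nat.prime_two⟩
  have h2K : (2 : K) = 0 := by
    have := CharP.cast_eq_zero K 2
    exact_mod_cast this
  have hfrob : ∀ a b : K, (a + b) ^ 2 ^ m = a ^ 2 ^ m + b ^ 2 ^ m := fun a b =>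
    add_pow_char_pow a b 2 m
  have hsq : ∀ a b : K, (a + b) ^ 2 = a ^ 2 + b ^ 2 := fun a b => add_pow_char a b 2
  -- basic nonvanishing
  have hu_ne : u ≠ 0 := fun h => by simp [h] at hu
  have hu0_ne : u0 ≠ 0 := fun h => by simp [h] at hu0U
  have h1u : (1 : K) + u ≠ 0 := by
    intro h
    apply hu1
    have : u = -1 := by linear_combination h
    rw [this, CharTwo.neg_eq]
  have h1ui : (1 : K) + u⁻¹ ≠ 0 := by
    intro h
    apply h1u
    have := congrArg (· * u) h
    simp [add_mul, inv_mul_cancel₀ hu_ne] at this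
    linear_combination this
  -- u^(2^m) = u⁻¹, u0^(2^m) = u0⁻¹
  have hum : u ^ 2 ^ m = u⁻¹ :=
    eq_inv_of_mul_eq_one_left (by rw [← pow_succ]; exact hu)
  have hu0m : u0 ^ 2 ^ m = u0⁻¹ :=
    eq_inv_of_mul_eq_one_left (by rw [← pow_succ]; exact hu0U)
  set N := 2 ^ (m - 1) with hN
  set S : K := ∑ i ∈ Finset.Icc 1 N, u ^ i with hSdef
  -- geometric sum identity
  have hS : S = u * ∑ i ∈ Finset.range N, u ^ i := by
    rw [hSdef, ← Finset.Ico_add_one_right_eq_Icc, Finset.sum_Ico_eq_sum_range]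
    simp [pow_add, pow_succ, Finset.mul_sum, mul_comm]
  have hgeo : S * (1 + u) = u ^ (N + 1) + u := by
    have := geom_sum_mul u N
    rw [CharTwo.sub_eq_add, CharTwo.sub_eq_add] at this
    calc S * (1 + u) = u * ((∑ i ∈ Finset.range N, u ^ i) * (u + 1)) := by
          rw [hS]; ring
      _ = u * (u ^ N + 1) := by rw [this]
      _ = u ^ (N + 1) + u := by ring
  -- key: S² * (1+u) = u
  have h2N : (N + 1) + (N + 1) = 2 ^ m + 2 := by
    have : 2 * N = 2 ^ m := by
      rw [hN, ← pow_succ']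
      congr 1
      omega
    omega
  have hpow : u ^ (N + 1) * u ^ (N + 1) = u := by
    rw [← pow_add, h2N, pow_add, hum]
    field_simp
  have hS2 : S ^ 2 * (1 + u) = u := by
    have hmul : (S * (1 + u)) ^ 2 = (u ^ (N + 1) + u) ^ 2 := by rw [hgeo]
    have key : S ^ 2 * (1 + u) * (1 + u) = u * (1 + u) := by
      linear_combination hmul + hpow + (u ^ (N + 1) * u) * h2K
    exact mul_right_cancel₀ h1u key
  have hS2' : S ^ 2 = u / (1 + u) := by
    field_simp
    linear_combination hS2
  have hfr1u : ((1 : K) + u) ^ 2 ^ m = 1 + u⁻¹ := by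
    rw [hfrob, one_pow, hum]
  -- expand the trace square
  unfold trmn
  rw [hsq, ← pow_mul, mul_comm (2 ^ m) 2, pow_mul]
  have hA : (u0 * S) ^ 2 = u0 ^ 2 * (u / (1 + u)) := by
    rw [mul_pow, hS2']
  have hB : ((u0 * S) ^ 2) ^ 2 ^ m = (u0 ^ 2)⁻¹ * (u⁻¹ / (1 + u⁻¹)) := by
    rw [hA, mul_pow, div_pow, hfr1u, hum, ← pow_mul, mul_comm 2 (2 ^ m), pow_mul,
      hu0m, inv_pow]
  have h4 : u / (1 + u) = 1 / (1 + u⁻¹) := by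
    rw [div_eq_div_iff h1u h1ui, mul_add, mul_inv_cancel₀ hu_ne]
    ring
  have h3 : u⁻¹ / (1 + u⁻¹) = 1 / (1 + u) := by
    rw [div_eq_div_iff h1ui h1u, mul_add, inv_mul_cancel₀ hu_ne, one_mul]
    ring
  have t1 : u0 ^ 2 * (u / (1 + u)) = u0 ^ 2 / (1 + u⁻¹) := by
    rw [h4, mul_one_div]
  have t2 : (u0 ^ 2)⁻¹ * (u⁻¹ / (1 + u⁻¹)) = (u0 ^ 2)⁻¹ / (1 + u) := by
    rw [h3, mul_one_div]
  rw [hB, hA, t1, t2]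
end

section
/- Let m and r be positive integers. The Dickson polynomial D_r induces a permutation of the finite field F_{2^m} if and only if gcd(r, 2^{2m} − 1) = 1. -/
open scoped Classical
open Polynomial

private lemma dpi_pair {F : Type*} [Field F] {u v : F} (hu : u ≠ 0) (hv : v ≠ 0)
    (h : u + u⁻¹ = v + v⁻¹) : v = u ∨ v = u⁻¹ := by
  have key : (v - u) * (u * v - 1) = 0 := by
    linear_combination (-(u * v)) * h + v * (mul_inv_cancel₀ hu) - u * (mul_inv_cancel₀ hv)
  rcases mul_eq_zero.mp key with h1 | h1
  · exact Or.inl (sub_eq_zero.mp h1)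
  · exact Or.inr (inv_eq_of_mul_eq_one_right (sub_eq_zero.mp h1)).symm

private lemma dpi_one {F : Type*} [Monoid F] {w : F} {a b : ℕ} (ha : w ^ a = 1)
    (hb : w ^ b = 1) (h : Nat.gcd a b = 1) : w = 1 :=
  orderOf_eq_one_iff.mp (Nat.dvd_one.mp (h ▸ Nat.dvd_gcd
    (orderOf_dvd_of_pow_eq_one ha) (orderOf_dvd_of_pow_eq_one hb)))

private lemma dpi_lift {F : Type*} [Field F] [IsAlgClosed F] [CharP F 2] (m : ℕ)
    {x : F} (hx : x ^ 2 ^ m = x) :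
    ∃ y : F, y ≠ 0 ∧ y + y⁻¹ = x ∧ y ^ 2 ^ (2 * m) = y := by
  have h2 : (2 : F) = 0 := CharTwo.two_eq_zero
  obtain ⟨y, hy⟩ := IsAlgClosed.exists_root (X ^ 2 + C x * X + 1 : F[X]) (by
    have : (X ^ 2 + C x * X + 1 : F[X]).degree = 2 := by compute_degree!
    rw [this]; exact (by norm_num))
  have hroot : y ^ 2 + x * y + 1 = 0 := by
    simpa [IsRoot] using hy
  have hy0 : y ≠ 0 := by rintro rfl; simp at hroot
  have hsum : y + y⁻¹ = x := by
    field_simp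
    linear_combination hroot - y * x * h2
  set z := y ^ 2 ^ m with hzdef
  have hz : z ^ 2 + x * z + 1 = 0 := by
    have h0 : (y ^ 2 + x * y + 1) ^ 2 ^ m = 0 := by
      rw [hroot]; exact zero_pow (by positivity)
    rw [add_pow_char_pow, add_pow_char_pow, one_pow, mul_pow, hx, ← pow_mul, mul_comm 2 (2 ^ m),
      pow_mul] at h0
    exact h0
  have key2 : (z + y) * (z + y + x) = 0 := by
    linear_combination hz + hroot + (z * y - 1) * h2
  have hQ : y ^ 2 ^ (2 * m) = z ^ 2 ^ m := by
    rw [two_mul, pow_add, pow_mul]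
  rcases mul_eq_zero.mp key2 with h1 | h1
  · have hzy : z = y := by linear_combination h1 - y * h2
    exact ⟨y, hy0, hsum, by rw [hQ, hzy]; exact hzdef.symm.trans hzy⟩
  · have hzy : z = y⁻¹ := by linear_combination h1 - hsum - x * h2
    refine ⟨y, hy0, hsum, ?_⟩
    rw [hQ, hzy, inv_pow, ← hzdef, hzy, inv_inv]






/-- The `r`-th binary Dickson polynomial (of the first kind, parameter `1`)
induces a permutation of the finite field `F_{2^m}` iff `gcd(r, 2^{2m} − 1) = 1`. -/
theorem dickson_permutation_iff (m r : ℕ) (hm : 0 < m) (hr : 0 < r)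
    (K : Type) [Field K] [Fintype K] (hcard : Fintype.card K = 2 ^ m) :
    Function.Bijective (fun x : K => (Polynomial.dickson 1 (1 : K) r).eval x) ↔
      Nat.gcd r (2 ^ (2 * m) - 1) = 1 := by
  -- characteristic 2
  have h2K : (2 : K) = 0 := by
    have h0 := FiniteField.cast_card_eq_zero K
    rw [hcard] at h0
    push_cast at h0
    exact pow_eq_zero_iff hm.ne' |>.mp h0
  haveI : CharP K 2 := CharTwo.of_one_ne_zero_of_two_eq_zero one_ne_zero h2K
  set Ω := AlgebraicClosure K with hΩ
  haveI : CharP Ω 2 := by infer_instance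
  set φ : K →+* Ω := algebraMap K Ω with hφdef
  have hφ : Function.Injective φ := φ.injective
  have hxq : ∀ c : K, (φ c) ^ 2 ^ m = φ c := by
    intro c
    rw [← map_pow]
    congr 1
    rw [← hcard]
    exact FiniteField.pow_card c
  have heval : ∀ (c : K) (y : Ω), y ≠ 0 → y + y⁻¹ = φ c →
      φ ((Polynomial.dickson 1 (1 : K) r).eval c) = y ^ r + (y⁻¹) ^ r := by
    intro c y hy hsum
    have h1 : φ ((dickson 1 (1 : K) r).eval c)
        = ((dickson 1 (1 : K) r).map φ).eval (φ c) := by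
      rw [eval_map, eval₂_hom]
    rw [h1, map_dickson, map_one, ← hsum,
      dickson_one_one_eval_add_inv y y⁻¹ (mul_inv_cancel₀ hy)]
  have hQpos : 1 ≤ 2 ^ (2 * m) := Nat.one_le_two_pow
  constructor
  · -- bijective → gcd = 1
    intro hbij
    by_contra hne
    obtain ⟨p, hp, hpd⟩ := Nat.exists_prime_and_dvd hne
    have hpr : p ∣ r := hpd.trans (Nat.gcd_dvd_left _ _)
    have hpQ : p ∣ 2 ^ (2 * m) - 1 := hpd.trans (Nat.gcd_dvd_right _ _)
    have hqpos : 1 ≤ 2 ^ m := Nat.one_le_two_pow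
    have hp2 : p ≠ 2 := by
      rintro rfl
      have h4 : 2 ∣ 2 ^ (2 * m) := dvd_pow_self 2 (by omega)
      obtain ⟨t, ht⟩ := hpQ
      obtain ⟨s, hs⟩ := h4
      omega
    -- find ζ ≠ 1 with ζ ^ p = 1
    obtain ⟨ζ, hζ⟩ := IsAlgClosed.exists_root (∑ i ∈ Finset.range p, (X : Polynomial Ω) ^ i) (by
      intro h0
      have hc := Polynomial.eq_C_of_degree_le_zero (le_of_eq h0)
      have hgs := geom_sum_mul (X : Polynomial Ω) p
      rw [hc] at hgs
      have hdeg1 : ((X : Polynomial Ω) ^ p - 1).degree = p := by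
        simpa using Polynomial.degree_X_pow_sub_C hp.pos (1 : Ω)
      have hle : ((X : Polynomial Ω) ^ p - 1).degree ≤ 1 := by
        rw [← hgs]
        refine (degree_mul_le _ _).trans ?_
        calc (C ((∑ i ∈ Finset.range p, (X : Polynomial Ω) ^ i).coeff 0)).degree
              + ((X : Polynomial Ω) - 1).degree ≤ 0 + 1 := by
              refine add_le_add degree_C_le ?_
              simpa using (degree_X_sub_C (1 : Ω)).le
          _ = 1 := by rw [zero_add]
      rw [hdeg1] at hle
      have := hp.two_le
      exact absurd (Nat.cast_le.mp ((by exact_mod_cast hle : (p : WithBot ℕ) ≤ (1 : ℕ)))) (by omega)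
      )
    have hζg : ∑ i ∈ Finset.range p, ζ ^ i = 0 := by
      simpa [Polynomial.eval_finset_sum] using hζ
    have hζp : ζ ^ p = 1 := by
      have hgs := geom_sum_mul ζ p
      rw [hζg, zero_mul] at hgs
      have := hgs.symm
      rw [sub_eq_zero] at this
      exact this
    have hζ1 : ζ ≠ 1 := by
      rintro rfl
      simp only [one_pow, Finset.sum_const, Finset.card_range, nsmul_eq_mul, mul_one] at hζg
      have h2p : (2 : ℕ) ∣ p := (CharP.cast_eq_zero_iff Ω 2 p).mp hζg
      exact hp2 ((Nat.prime_dvd_prime_iff_eq Nat.prime_two hp).mp h2p).symm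
    have hζ0 : ζ ≠ 0 := by
      rintro rfl
      rw [zero_pow hp.pos.ne'] at hζp
      exact zero_ne_one hζp
    -- ζ + ζ⁻¹ is fixed by Frobenius^m
    have hfact : 2 ^ (2 * m) - 1 = (2 ^ m - 1) * (2 ^ m + 1) := by
      obtain ⟨k, hk⟩ : ∃ k, 2 ^ m = k + 1 := ⟨2 ^ m - 1, by omega⟩
      have h2 : 2 ^ (2 * m) = 2 ^ m * 2 ^ m := by rw [two_mul, pow_add]
      rw [h2, hk]
      have h1 : 1 ≤ (k + 1) * (k + 1) := Nat.mul_pos (by omega) (by omega)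
      zify [h1, (by omega : 1 ≤ k + 1)]
      ring
    rw [hfact] at hpQ
    have hxq' : (ζ + ζ⁻¹) ^ 2 ^ m = ζ + ζ⁻¹ := by
      rw [add_pow_char_pow]
      rcases (Nat.Prime.dvd_mul hp).mp hpQ with h | h
      · have h1 : ζ ^ (2 ^ m - 1) = 1 := by
          obtain ⟨t, ht⟩ := h
          rw [ht, pow_mul, hζp, one_pow]
        have hq1 : ζ ^ 2 ^ m = ζ := by
          calc ζ ^ 2 ^ m = ζ ^ (2 ^ m - 1) * ζ := by
                rw [← pow_succ]; congr 1; omega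
            _ = ζ := by rw [h1, one_mul]
        rw [hq1, inv_pow, hq1]
      · have h1 : ζ ^ 2 ^ m * ζ = 1 := by
          rw [← pow_succ]
          obtain ⟨t, ht⟩ := h
          have : 2 ^ m + 1 = p * t := ht
          rw [this, pow_mul, hζp, one_pow]
        have hq1 : ζ ^ 2 ^ m = ζ⁻¹ := eq_inv_of_mul_eq_one_left h1
        rw [hq1, inv_pow, hq1, inv_inv, add_comm]
    have hx0 : ζ + ζ⁻¹ ≠ 0 := by
      intro h0
      have hζ2 : ζ ^ 2 = 1 := by
        have h2 : (2 : Ω) = 0 := CharTwo.two_eq_zero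
        have hmi := mul_inv_cancel₀ hζ0
        linear_combination ζ * h0 - hmi - h2
      obtain ⟨k, hk⟩ := hp.odd_of_ne_two hp2
      apply hζ1
      calc ζ = (ζ ^ 2) ^ k * ζ := by rw [hζ2, one_pow, one_mul]
        _ = ζ ^ p := by rw [← pow_mul, ← pow_succ, hk]
        _ = 1 := hζp
    -- ζ + ζ⁻¹ lands in the image of K
    obtain ⟨c, hc⟩ : ∃ c : K, φ c = ζ + ζ⁻¹ := by
      classical
      set P : Polynomial Ω := X ^ 2 ^ m - X with hPdef
      have hdegP : P.degree = (2 ^ m : ℕ) := by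
        rw [hPdef, degree_sub_eq_left_of_degree_lt, degree_X_pow]
        rw [degree_X_pow, degree_X]
        exact_mod_cast Nat.one_lt_two_pow_iff.mpr hm.ne'
      have hP0 : P ≠ 0 := fun h => by
        rw [h, degree_zero] at hdegP
        exact absurd hdegP.symm (by rw [Nat.cast_withBot]; exact WithBot.coe_ne_bot)
      have hroots : ∀ z : Ω, z ^ 2 ^ m = z → z ∈ P.roots.toFinset := by
        intro z hz
        rw [Multiset.mem_toFinset, mem_roots hP0]
        simp [IsRoot, hPdef, hz]
      have hsub : Finset.univ.image φ ⊆ P.roots.toFinset := by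
        intro z hz
        obtain ⟨c, -, rfl⟩ := Finset.mem_image.mp hz
        exact hroots _ (hxq c)
      have hcards : P.roots.toFinset.card ≤ (Finset.univ.image φ).card := by
        calc P.roots.toFinset.card ≤ Multiset.card P.roots := Multiset.toFinset_card_le _
          _ ≤ P.natDegree := card_roots' P
          _ = 2 ^ m := natDegree_eq_of_degree_eq_some hdegP
          _ = (Finset.univ.image φ).card := by
              rw [Finset.card_image_of_injective _ hφ, Finset.card_univ, hcard]
      have heq := Finset.eq_of_subset_of_card_le hsub hcards
      have hxmem := hroots _ hxq'
      rw [← heq] at hxmem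
      obtain ⟨c, -, hc⟩ := Finset.mem_image.mp hxmem
      exact ⟨c, hc⟩
    have hζr : ζ ^ r = 1 := by
      obtain ⟨t, ht⟩ := hpr
      rw [ht, pow_mul, hζp, one_pow]
    have hevalc : φ ((dickson 1 (1 : K) r).eval c) = 0 := by
      rw [heval c ζ hζ0 hc.symm, inv_pow, hζr, inv_one, CharTwo.add_self_eq_zero]
    have heval0 : φ ((dickson 1 (1 : K) r).eval 0) = 0 := by
      have hsum1 : (1 : Ω) + 1⁻¹ = φ 0 := by
        rw [inv_one, map_zero, CharTwo.add_self_eq_zero]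
      rw [heval 0 1 one_ne_zero hsum1, one_pow, inv_one, one_pow, CharTwo.add_self_eq_zero]
    have hc0 : c = 0 := hbij.injective (hφ (hevalc.trans heval0.symm))
    rw [hc0, map_zero] at hc
    exact hx0 hc.symm
  · -- gcd = 1 → bijective
    intro hgcd
    rw [Fintype.bijective_iff_injective_and_card]
    refine ⟨?_, rfl⟩
    intro a b hab
    simp only at hab
    obtain ⟨y₁, hy₁0, hy₁s, hy₁Q⟩ := dpi_lift m (hxq a)
    obtain ⟨y₂, hy₂0, hy₂s, hy₂Q⟩ := dpi_lift m (hxq b)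
    have e1 := heval a y₁ hy₁0 hy₁s
    have e2 := heval b y₂ hy₂0 hy₂s
    rw [hab, e2] at e1
    rw [inv_pow, inv_pow] at e1
    have hpow : ∀ y : Ω, y ≠ 0 → y ^ 2 ^ (2 * m) = y → y ^ (2 ^ (2 * m) - 1) = 1 := by
      intro y hy hyQ
      have h1 : y ^ (2 ^ (2 * m) - 1) * y = 1 * y := by
        rw [← pow_succ, one_mul, Nat.sub_add_cancel hQpos, hyQ]
      exact mul_right_cancel₀ hy h1
    rcases dpi_pair (pow_ne_zero r hy₂0) (pow_ne_zero r hy₁0) e1 with h | h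
    · -- y₁ ^ r = y₂ ^ r
      have hw : (y₁ / y₂) = 1 := by
        apply dpi_one (a := r) (b := 2 ^ (2 * m) - 1) _ _ hgcd
        · rw [div_pow, h, div_self (pow_ne_zero r hy₂0)]
        · rw [div_pow, hpow y₁ hy₁0 hy₁Q, hpow y₂ hy₂0 hy₂Q, div_one]
      have : y₁ = y₂ := by
        rw [div_eq_one_iff_eq hy₂0] at hw
        exact hw
      apply hφ
      rw [← hy₁s, ← hy₂s, this]
    · -- y₁ ^ r = (y₂ ^ r)⁻¹
      have hw : (y₁ * y₂) = 1 := by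
        apply dpi_one (a := r) (b := 2 ^ (2 * m) - 1) _ _ hgcd
        · rw [mul_pow, h, inv_mul_cancel₀ (pow_ne_zero r hy₂0)]
        · rw [mul_pow, hpow y₁ hy₁0 hy₁Q, hpow y₂ hy₂0 hy₂Q, one_mul]
      have h12 : y₁ = y₂⁻¹ := eq_inv_of_mul_eq_one_left hw
      apply hφ
      rw [← hy₁s, ← hy₂s, h12, inv_inv, add_comm]
end

section
/- Let a ∈ F_{2^n}^*, let i be a positive integer with gcd(i, 2^n − 1) = 1, and let t be the multiplicative inverse of 2i modulo 2^n − 1. Then for u ∈ U, one has a u^i + a^{2^m} u^{−i} = 0 if and only if u = a^{t(2^m − 1)}. -/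
/-!
In characteristic 2 the equation `a v + a^{2^m} v⁻¹ = 0` with `v = uⁱ` says `v² = a^{2^m - 1}`,
i.e. `u^{2i} = a^{2^m - 1}`. Since `2i * t ≡ 1 (mod 2^n - 1)`, raising to the `t`-th power is
inverse to raising to the `2i`-th power on `F_{2^n}^*`, so this holds iff `u = a^{t(2^m - 1)}`.
-/

theorem CharTwo.mul_add_mul_inv_eq_zero_iff {K : Type*} [Field K] [CharP K 2] {a b v : K}
    (ha : a ≠ 0) (hv : v ≠ 0) : a * v + b * v⁻¹ = 0 ↔ v ^ 2 = b / a := by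
  rw [CharTwo.add_eq_zero, eq_div_iff ha, eq_mul_inv_iff_mul_eq₀ hv]
  ring_nf

namespace FiniteField

variable {K : Type*} [Field K] [Fintype K]

theorem pow_mul_eq_self_of_mul_mod_card_sub_one {x : K} (hx : x ≠ 0) {n t : ℕ}
    (hnt : n * t % (Fintype.card K - 1) = 1) : x ^ (n * t) = x := by
  rw [pow_eq_pow_mod _ (pow_card_sub_one_eq_one x hx), hnt, pow_one]

theorem pow_eq_iff_eq_pow_of_mul_mod_card_sub_one {x y : K} (hx : x ≠ 0) (hy : y ≠ 0)
    {n t : ℕ} (hnt : n * t % (Fintype.card K - 1) = 1) : x ^ n = y ↔ x = y ^ t := by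
  constructor
  · rintro rfl
    rw [← pow_mul, pow_mul_eq_self_of_mul_mod_card_sub_one hx hnt]
  · rintro rfl
    rw [← pow_mul, mul_comm, pow_mul_eq_self_of_mul_mod_card_sub_one hy hnt]

end FiniteField

theorem vanishing_criterion_general (m : ℕ)
    (K : Type) [Field K] [Fintype K]
    (hcard : Fintype.card K = 2 ^ (2 * m))
    (a : K) (ha : a ≠ 0)
    (i : ℕ)
    (t : ℕ) (ht : (2 * i * t) % (2 ^ (2 * m) - 1) = 1)
    (u : K) (hu : u ^ (2 ^ m + 1) = 1) :
    a * u ^ i + a ^ 2 ^ m * (u⁻¹) ^ i = 0 ↔ u = a ^ (t * (2 ^ m - 1)) := by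
  have : CharP K 2 := charP_of_card_eq_prime_pow hcard
  have hu0 : u ≠ 0 := by
    rintro rfl
    simp at hu
  have hquot : a ^ 2 ^ m / a = a ^ (2 ^ m - 1) := by
    rw [pow_sub₀ a ha Nat.one_le_two_pow, pow_one, div_eq_mul_inv]
  rw [inv_pow, CharTwo.mul_add_mul_inv_eq_zero_iff ha (pow_ne_zero i hu0), hquot, ← pow_mul,
    mul_comm i, FiniteField.pow_eq_iff_eq_pow_of_mul_mod_card_sub_one hu0
      (pow_ne_zero _ ha) (hcard ▸ ht), ← pow_mul, mul_comm]

/-- Let `a ∈ F_{2^{2m}}^*`, `i` a positive integer coprime with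
`2^{2m} − 1`, and `t` the multiplicative inverse of `2i` modulo `2^{2m} − 1`.  Then for
`u ∈ U = {x : x^{2^m+1} = 1}`, one has `a uⁱ + a^{2^m} u^{−i} = 0` iff `u = a^{t(2^m−1)}`. -/
theorem vanishing_criterion (m : ℕ) (hm : 0 < m)
    (K : Type) [Field K] [Fintype K]
    (hcard : Fintype.card K = 2 ^ (2 * m))
    (a : K) (ha : a ≠ 0)
    (i : ℕ) (hi : 0 < i) (hgcd : Nat.gcd i (2 ^ (2 * m) - 1) = 1)
    (t : ℕ) (ht : (2 * i * t) % (2 ^ (2 * m) - 1) = 1)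
    (u : K) (hu : u ^ (2 ^ m + 1) = 1) :
    a * u ^ i + a ^ 2 ^ m * (u⁻¹) ^ i = 0 ↔ u = a ^ (t * (2 ^ m - 1)) :=
  vanishing_criterion_general m K hcard a ha i t ht u hu
end
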